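/- arXiv:1908.04708 — 5 statements merged into one kernel-verified Lean document; each statement's English description precedes it below -/
import Mathlib

section
/- For every integer n ≥ 1, the minimal length of a universal word satisfies m(n) ≤ B(n), where B(n) = 1 + Σ_{d | n} c(d)·(d + n − 2), the sum ranging over positive divisors d of n. -/
open Equiv Filter Topology

/-- The cyclic permutation `σ : i ↦ i + 1` of `ZMod n`. -/
def cyc (n : ℕ) : Equiv.Perm (ZMod n) := Equiv.addRight (1 : ZMod n)

/-- The equivalence relation `R₂`: `π R₂ π'` iff `π' = σ^i ∘ π` for some integer `i`. -/
def incSetoid (n : ℕ) : Setoid (Equiv.Perm (ZMod n)) where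
  r π π' := ∃ i : ℤ, π' = cyc n ^ i * π
  iseqv := by
    constructor
    · exact fun π => ⟨0, by simp⟩
    · rintro π π' ⟨i, rfl⟩
      exact ⟨-i, by rw [← mul_assoc, ← zpow_add]; simp⟩
    · rintro a b c ⟨i, rfl⟩ ⟨j, rfl⟩
      exact ⟨j + i, by rw [← mul_assoc, ← zpow_add]⟩

/-- The set of `R₂`-equivalence classes. -/
def IncClasses (n : ℕ) := Quotient (incSetoid n)

/-- The well-defined map `inc(π) ↦ inc(π ∘ σ)` on `R₂`-classes. -/
def incShift (n : ℕ) : IncClasses n → IncClasses n :=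
  Quot.map (fun π => π * cyc n)
    (by rintro π π' ⟨i, rfl⟩; exact ⟨i, by (try simp only []); rw [mul_assoc]⟩)

/-- The 1-cycle (orbit under `inc(ρ) ↦ inc(ρ∘σ)`) of a class `q`. -/
def oneCycle (n : ℕ) (q : IncClasses n) : Set (IncClasses n) :=
  Set.range fun i : ℕ => (incShift n)^[i] q

/-- `c(d)`: the number of 1-cycles of cardinality `d`. -/
noncomputable def numCycles (n d : ℕ) : ℕ :=
  Set.ncard {S : Set (IncClasses n) | (∃ q, S = oneCycle n q) ∧ S.ncard = d}

/-- `B(n) = 1 + Σ_{d ∣ n} c(d)·(d + n − 2)`, the sum over positive divisors `d` of `n`. -/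
noncomputable def Bbound (n : ℕ) : ℕ :=
  1 + ∑ d ∈ n.divisors, numCycles n d * (d + n - 2)

/-- One-line word `ρ(1)ρ(2)⋯ρ(n)` of a permutation `ρ` of `ZMod n`. -/
def oneLine (n : ℕ) (ρ : Equiv.Perm (ZMod n)) : List (ZMod n) :=
  List.ofFn fun j : Fin n => ρ (((j : ℕ) + 1 : ℕ) : ZMod n)

/-- A word over the alphabet `ZMod n` is universal for `R₂` if for every permutation `π`
some contiguous factor of it equals the one-line word of some `ρ ∈ inc(π)`,
i.e. some `ρ = σ^i ∘ π`. -/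
def IsUniversalR2 (n : ℕ) (w : List (ZMod n)) : Prop :=
  ∀ π : Equiv.Perm (ZMod n), ∃ ρ : Equiv.Perm (ZMod n),
    (∃ i : ℤ, ρ = cyc n ^ i * π) ∧ oneLine n ρ <:+: w

/-- `m(n)`: the minimal length of a universal word for `R₂`. -/
noncomputable def mWord (n : ℕ) : ℕ :=
  sInf {k | ∃ w : List (ZMod n), w.length = k ∧ IsUniversalR2 n w}

namespace R2Aux

variable (n : ℕ)

abbrev mkC (π : Equiv.Perm (ZMod n)) : IncClasses n := Quotient.mk (incSetoid n) π

lemma incShift_mk (π : Equiv.Perm (ZMod n)) :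
    incShift n (mkC n π) = mkC n (π * cyc n) := rfl

lemma cyc_pow_apply (j : ℕ) (x : ZMod n) : (cyc n ^ j) x = x + (j : ZMod n) := by
  induction j with
  | zero => simp
  | succ k ih =>
    rw [pow_succ', Equiv.Perm.mul_apply, ih]
    simp [cyc, Equiv.coe_addRight]
    push_cast
    ring

lemma cyc_pow_n : cyc n ^ n = 1 := by
  ext x
  rw [cyc_pow_apply]
  simp [ZMod.natCast_self]

lemma iterate_incShift (π : Equiv.Perm (ZMod n)) (j : ℕ) :
    (incShift n)^[j] (mkC n π) = mkC n (π * cyc n ^ j) := by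
  induction j with
  | zero => simp
  | succ k ih =>
    rw [Function.iterate_succ_apply', ih, incShift_mk, mul_assoc, ← pow_succ]

lemma isPeriodic (q : IncClasses n) : Function.IsPeriodicPt (incShift n) n q := by
  induction q using Quotient.inductionOn with
  | h π =>
    show (incShift n)^[n] _ = _
    rw [iterate_incShift, cyc_pow_n, mul_one]

noncomputable def per (q : IncClasses n) : ℕ := Function.minimalPeriod (incShift n) q

lemma per_dvd (q : IncClasses n) : per n q ∣ n :=
  (isPeriodic n q).minimalPeriod_dvd

lemma per_pos (hn : 0 < n) (q : IncClasses n) : 0 < per n q :=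
  (isPeriodic n q).minimalPeriod_pos hn

lemma exists_lt_per (hn : 0 < n) (q r : IncClasses n) (hr : r ∈ oneCycle n q) :
    ∃ j < per n q, (incShift n)^[j] q = r := by
  obtain ⟨i, rfl⟩ := hr
  exact ⟨i % per n q, Nat.mod_lt _ (per_pos n hn q),
    Function.iterate_mod_minimalPeriod_eq⟩

lemma ncard_oneCycle (hn : 0 < n) (q : IncClasses n) :
    (oneCycle n q).ncard = per n q := by
  have h1 : oneCycle n q = (fun i => (incShift n)^[i] q) '' Set.Iio (per n q) := by
    ext r
    constructor
    · rintro ⟨i, rfl⟩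
      exact ⟨i % per n q, Nat.mod_lt _ (per_pos n hn q),
        Function.iterate_mod_minimalPeriod_eq⟩
    · rintro ⟨i, _, rfl⟩
      exact ⟨i, rfl⟩
  rw [h1]
  show ((fun i => (incShift n)^[i] q) '' Set.Iio (Function.minimalPeriod (incShift n) q)).ncard = _
  rw [Set.ncard_image_of_injOn Function.iterate_injOn_Iio_minimalPeriod,
    ← Finset.coe_range, Set.ncard_coe_finset, Finset.card_range]
  rfl

lemma exists_rep [NeZero n] (q : IncClasses n) (a : ZMod n) :
    ∃ π : Equiv.Perm (ZMod n), mkC n π = q ∧ π 1 = a := by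
  obtain ⟨π₀, rfl⟩ := Quotient.exists_rep q
  set c : ZMod n := a - π₀ 1 with hc
  refine ⟨cyc n ^ c.val * π₀, ?_, ?_⟩
  · refine Quotient.sound ⟨-(c.val : ℤ), ?_⟩
    rw [← mul_assoc, ← zpow_natCast (cyc n) c.val, ← zpow_add]
    simp
  · rw [Equiv.Perm.mul_apply, cyc_pow_apply, ZMod.natCast_val, ZMod.cast_id]
    rw [hc]; ring

noncomputable def rep [NeZero n] (q : IncClasses n) (a : ZMod n) : Equiv.Perm (ZMod n) :=
  (exists_rep n q a).choose

lemma rep_mk [NeZero n] (q : IncClasses n) (a : ZMod n) : mkC n (rep n q a) = q :=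
  (exists_rep n q a).choose_spec.1

lemma rep_one [NeZero n] (q : IncClasses n) (a : ZMod n) : rep n q a 1 = a :=
  (exists_rep n q a).choose_spec.2

def Wword (π : Equiv.Perm (ZMod n)) (d : ℕ) : List (ZMod n) :=
  List.ofFn fun k : Fin (n + d - 1) => π (((k : ℕ) + 1 : ℕ) : ZMod n)

lemma Wword_length (π : Equiv.Perm (ZMod n)) (d : ℕ) :
    (Wword n π d).length = n + d - 1 := by simp [Wword]

lemma oneLine_eq (π : Equiv.Perm (ZMod n)) (d j : ℕ) (hj : j + n ≤ n + d - 1) :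
    oneLine n (π * cyc n ^ j) = ((Wword n π d).take (j + n)).drop j := by
  apply List.ext_getElem
  · simp [oneLine, Wword]
    omega
  · intro t h1 h2
    have hlen : (Wword n π d).length = n + d - 1 := Wword_length n π d
    rw [List.getElem_drop, List.getElem_take]
    simp only [oneLine, Wword, List.getElem_ofFn]
    rw [Equiv.Perm.mul_apply, cyc_pow_apply]
    congr 1
    push_cast
    ring

lemma oneLine_infix_W (π : Equiv.Perm (ZMod n)) (d j : ℕ) (hd : 0 < d) (hj : j < d) :
    oneLine n (π * cyc n ^ j) <:+: Wword n π d := by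
  have hj' : j + n ≤ n + d - 1 := by omega
  rw [oneLine_eq n π d j hj']
  exact ((List.drop_suffix j _).isInfix).trans ((List.take_prefix (j + n) _).isInfix)

lemma Wword_ne_nil (hn : 0 < n) (π : Equiv.Perm (ZMod n)) {d : ℕ} (hd : 0 < d) :
    Wword n π d ≠ [] := by
  apply List.ne_nil_of_length_pos
  rw [Wword_length]
  omega

lemma Wword_head (hn : 0 < n) (π : Equiv.Perm (ZMod n)) (d : ℕ) (h : Wword n π d ≠ []) :
    (Wword n π d).head h = π 1 := by
  rw [List.head_eq_getElem]
  simp only [Wword, List.getElem_ofFn]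
  norm_num

noncomputable def chainTail [NeZero n] : ZMod n → List (IncClasses n) → List (ZMod n)
  | _, [] => []
  | a, q :: rest =>
    (Wword n (rep n q a) (per n q)).tail ++
      chainTail ((Wword n (rep n q a) (per n q)).getLastD a) rest

lemma chainTail_length [NeZero n] (a : ZMod n) (l : List (IncClasses n)) :
    (chainTail n a l).length = (l.map fun q => n + per n q - 2).sum := by
  induction l generalizing a with
  | nil => simp [chainTail]
  | cons q rest ih =>
    rw [chainTail]
    rw [List.length_append, List.length_tail, Wword_length, ih]
    simp only [List.map_cons, List.sum_cons]
    omega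

lemma chain_spec [NeZero n] (hn : 0 < n) (l : List (IncClasses n)) (a : ZMod n)
    (π : Equiv.Perm (ZMod n)) (h : ∃ q ∈ l, mkC n π ∈ oneCycle n q) :
    ∃ ρ, mkC n ρ = mkC n π ∧ oneLine n ρ <:+: a :: chainTail n a l := by
  induction l generalizing a with
  | nil => obtain ⟨q, hq, -⟩ := h; simp at hq
  | cons q rest ih =>
    set πr := rep n q a with hπr
    set d := per n q with hd
    set W := Wword n πr d with hW
    have hWne : W ≠ [] := Wword_ne_nil n hn πr (per_pos n hn q)
    have hsplit : a :: chainTail n a (q :: rest) = W ++ chainTail n (W.getLastD a) rest := by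
      rw [chainTail, ← List.cons_append]
      congr 1
      conv_rhs => rw [← List.cons_head_tail hWne]
      rw [Wword_head n hn πr d hWne, rep_one]
    obtain ⟨q', hq', hmem⟩ := h
    rcases List.mem_cons.mp hq' with rfl | hrest
    · obtain ⟨j, hj, hjq⟩ := exists_lt_per n hn q' (mkC n π) hmem
      refine ⟨πr * cyc n ^ j, ?_, ?_⟩
      · rw [← iterate_incShift, hπr, rep_mk]
        exact hjq
      · rw [hsplit]
        exact (oneLine_infix_W n πr d j (per_pos n hn q') hj).trans
          (List.prefix_append W _).isInfix
    · obtain ⟨ρ, hρ, hinf⟩ := ih (W.getLastD a) ⟨q', hrest, hmem⟩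
      refine ⟨ρ, hρ, ?_⟩
      rw [hsplit]
      refine hinf.trans ?_
      have hgl : W.getLastD a = W.getLast hWne := by
        rw [List.getLastD_eq_getLast?, List.getLast?_eq_getLast hWne]
        rfl
      have key : W.dropLast ++ (W.getLastD a :: chainTail n (W.getLastD a) rest)
          = W ++ chainTail n (W.getLastD a) rest := by
        rw [← List.singleton_append, ← List.append_assoc]
        congr 1
        rw [hgl]
        exact List.dropLast_append_getLast hWne
      rw [← key]
      exact (List.suffix_append _ _).isInfix

end R2Aux


open R2Aux in
/-- For every `n ≥ 1`, the minimal length of a universal word satisfies `m(n) ≤ B(n)`. -/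
theorem stmt0 (n : ℕ) (hn : 1 ≤ n) : mWord n ≤ Bbound n := by
  classical
  haveI : NeZero n := ⟨by omega⟩
  haveI : Finite (IncClasses n) := Quotient.finite _
  haveI : Fintype (IncClasses n) := Fintype.ofFinite _
  haveI hne : Nonempty (IncClasses n) := ⟨mkC n 1⟩
  set C : Finset (Set (IncClasses n)) := Finset.image (oneCycle n) Finset.univ with hC
  set g : Set (IncClasses n) → IncClasses n := fun S =>
    if h : ∃ q, S = oneCycle n q then h.choose else Classical.arbitrary _ with hgdef
  have hg : ∀ S ∈ C, S = oneCycle n (g S) := by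
    intro S hS
    rw [hC, Finset.mem_image] at hS
    obtain ⟨q, -, hq⟩ := hS
    have h : ∃ q, S = oneCycle n q := ⟨q, hq.symm⟩
    rw [hgdef]
    simp only [dif_pos h]
    exact h.choose_spec
  set l : List (IncClasses n) := C.toList.map g with hl
  set w : List (ZMod n) := (0 : ZMod n) :: chainTail n 0 l with hw
  have huniv : IsUniversalR2 n w := by
    intro π
    have hSC : oneCycle n (mkC n π) ∈ C := by
      rw [hC]; exact Finset.mem_image_of_mem _ (Finset.mem_univ _)
    have hmem : mkC n π ∈ oneCycle n (g (oneCycle n (mkC n π))) := by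
      rw [← hg _ hSC]; exact ⟨0, rfl⟩
    have hql : g (oneCycle n (mkC n π)) ∈ l := by
      rw [hl]; exact List.mem_map_of_mem (f := g) (Finset.mem_toList.mpr hSC)
    obtain ⟨ρ, hρ, hinf⟩ := chain_spec n (by omega) l 0 π ⟨_, hql, hmem⟩
    refine ⟨ρ, ?_, hinf⟩
    obtain ⟨i, hi⟩ := Quotient.exact hρ
    exact ⟨-i, by rw [hi, ← mul_assoc, ← zpow_add]; simp⟩
  have hper : ∀ S ∈ C, per n (g S) = S.ncard := by
    intro S hS
    conv_rhs => rw [hg S hS]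
    rw [ncard_oneCycle n (by omega)]
  have hmaps : ∀ S ∈ C, S.ncard ∈ n.divisors := by
    intro S hS
    rw [Nat.mem_divisors]
    exact ⟨(hper S hS) ▸ per_dvd n (g S), by omega⟩
  have hcard : ∀ d, numCycles n d = (C.filter fun S => S.ncard = d).card := by
    intro d
    have hset : {S : Set (IncClasses n) | (∃ q, S = oneCycle n q) ∧ S.ncard = d}
        = ↑(C.filter fun S => S.ncard = d) := by
      ext S
      simp only [Set.mem_setOf_eq, Finset.coe_filter, Finset.mem_image, hC,
        Finset.mem_univ, true_and, Set.mem_setOf_eq]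
      constructor
      · rintro ⟨⟨q, rfl⟩, h2⟩; exact ⟨⟨q, rfl⟩, h2⟩
      · rintro ⟨⟨q, rfl⟩, h2⟩; exact ⟨⟨q, rfl⟩, h2⟩
    rw [numCycles, hset, Set.ncard_coe_finset]
  have hlen : w.length = Bbound n := by
    rw [hw, List.length_cons, chainTail_length, hl, List.map_map]
    rw [Finset.sum_map_toList]
    have h1 : ∑ S ∈ C, ((fun q => n + per n q - 2) ∘ g) S = ∑ S ∈ C, (S.ncard + n - 2) := by
      refine Finset.sum_congr rfl fun S hS => ?_
      simp only [Function.comp_apply, hper S hS]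
      omega
    rw [h1, ← Finset.sum_fiberwise_of_maps_to hmaps (fun S => S.ncard + n - 2)]
    have h2 : ∀ d ∈ n.divisors,
        ∑ S ∈ C.filter (fun S => S.ncard = d), (S.ncard + n - 2) = numCycles n d * (d + n - 2) := by
      intro d hd
      rw [Finset.sum_congr rfl (fun S hS => by
        rw [(Finset.mem_filter.mp hS).2]), Finset.sum_const, smul_eq_mul, hcard d]
    rw [Finset.sum_congr rfl h2, Bbound]
    omega
  have : mWord n ≤ w.length := Nat.sInf_le ⟨w, rfl, huniv⟩
  omega
end

section
/- For every integer n ≥ 1, the minimal length of a universal word satisfies m(n) ≥ (n−1)! + n − 2 + Σ_{d | n} c(d), the sum ranging over positive divisors d of n. -/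
open Equiv Filter Topology

/-- the homomorphism `a ↦ addRight a`. -/
def cycHom (n : ℕ) : Multiplicative (ZMod n) →* Equiv.Perm (ZMod n) where
  toFun a := Equiv.addRight a.toAdd
  map_one' := by ext x; simp
  map_mul' a b := by ext x; simp [toAdd_mul]; ring

lemma cycHom_injective (n : ℕ) : Function.Injective (cycHom n) := by
  intro a b h
  have := congrArg (fun e : Equiv.Perm (ZMod n) => e 0) h
  simpa [cycHom] using this

lemma orderOf_cyc (n : ℕ) : orderOf (cyc n) = n := by
  have : cyc n = cycHom n (Multiplicative.ofAdd 1) := rfl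
  rw [this, orderOf_injective _ (cycHom_injective n), orderOf_ofAdd_eq_addOrderOf,
    ZMod.addOrderOf_one]

lemma cyc_pow_n (n : ℕ) : (cyc n) ^ n = 1 := by
  have h := pow_orderOf_eq_one (cyc n); rwa [orderOf_cyc] at h

lemma incSetoid_eq_rightRel (n : ℕ) :
    incSetoid n = QuotientGroup.rightRel (Subgroup.zpowers (cyc n)) := by
  apply Setoid.ext
  intro x y
  rw [QuotientGroup.rightRel_apply]
  constructor
  · rintro ⟨i, rfl⟩
    exact ⟨i, by group⟩
  · rintro ⟨i, hi⟩
    refine ⟨i, ?_⟩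
    simp only [] at hi
    rw [hi]; group

lemma card_IncClasses (n : ℕ) (hn : 1 ≤ n) : Nat.card (IncClasses n) = (n - 1).factorial := by
  haveI : NeZero n := ⟨by omega⟩
  have h1 : Nat.card (IncClasses n) =
      Nat.card (Equiv.Perm (ZMod n) ⧸ Subgroup.zpowers (cyc n)) := by
    refine Nat.card_congr ?_
    refine Equiv.trans (Equiv.cast ?_) (QuotientGroup.quotientRightRelEquivQuotientLeftRel _)
    show Quotient (incSetoid n) = _
    rw [incSetoid_eq_rightRel]
  have h2 := Subgroup.card_eq_card_quotient_mul_card_subgroup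
    (Subgroup.zpowers (cyc n))
  rw [Nat.card_zpowers, orderOf_cyc] at h2
  have h3 : Nat.card (Equiv.Perm (ZMod n)) = n.factorial := by
    rw [Nat.card_eq_fintype_card, Fintype.card_perm, ZMod.card]
  have h4 : n.factorial = (n - 1).factorial * n := by
    obtain ⟨m, rfl⟩ : ∃ m, n = m + 1 := ⟨n - 1, by omega⟩
    simp [Nat.factorial_succ]; ring
  rw [h3, h4, ← h1] at h2
  have hn' : 0 < n := hn
  exact (Nat.eq_of_mul_eq_mul_right hn' h2.symm)

lemma oneLine_length (n : ℕ) (ρ : Equiv.Perm (ZMod n)) : (oneLine n ρ).length = n := by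
  simp [oneLine]

def WinAt (n : ℕ) (w : List (ZMod n)) (p : ℕ) (ρ : Equiv.Perm (ZMod n)) : Prop :=
  p + n ≤ w.length ∧ ∀ j < n, w[p + j]? = some (ρ ((j + 1 : ℕ) : ZMod n))

lemma winAt_of_infix {n : ℕ} {w : List (ZMod n)} {ρ : Equiv.Perm (ZMod n)}
    (h : oneLine n ρ <:+: w) : ∃ p, WinAt n w p ρ := by
  obtain ⟨s, t, hw⟩ := h
  refine ⟨s.length, ?_, ?_⟩
  · rw [← hw]
    simp [oneLine_length]
  · intro j hj
    rw [← hw, List.append_assoc, List.getElem?_append_right (by omega),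
      Nat.add_sub_cancel_left, List.getElem?_append_left (by simp [oneLine_length, hj])]
    simp [oneLine, List.getElem?_ofFn, List.ofFnNthVal, hj]

lemma exists_succ_cast {n : ℕ} (hn : 1 ≤ n) (x : ZMod n) :
    ∃ j < n, ((j + 1 : ℕ) : ZMod n) = x := by
  haveI : NeZero n := ⟨by omega⟩
  refine ⟨(x - 1).val, ZMod.val_lt _, ?_⟩
  push_cast
  rw [ZMod.natCast_val, ZMod.cast_id]
  ring

lemma winAt_inj {n : ℕ} (hn : 1 ≤ n) {w : List (ZMod n)} {p : ℕ}
    {ρ ρ' : Equiv.Perm (ZMod n)} (h1 : WinAt n w p ρ) (h2 : WinAt n w p ρ') : ρ = ρ' := by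
  ext x
  obtain ⟨j, hj, rfl⟩ := exists_succ_cast hn x
  have e1 := h1.2 j hj
  have e2 := h2.2 j hj
  rw [e1] at e2
  exact Option.some_injective _ e2

lemma winAt_succ {n : ℕ} (hn : 1 ≤ n) {w : List (ZMod n)} {p : ℕ}
    {ρ ρ' : Equiv.Perm (ZMod n)} (h1 : WinAt n w p ρ) (h2 : WinAt n w (p + 1) ρ') :
    ρ' = ρ * cyc n := by
  haveI : NeZero n := ⟨by omega⟩
  have stepA : ∀ x : ZMod n, x ≠ 0 → ρ' x = ρ (x + 1) := by
    intro x hx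
    have hk : x.val < n := ZMod.val_lt x
    have hk0 : x.val ≠ 0 := fun h => hx ((ZMod.val_eq_zero x).mp h)
    obtain ⟨j, hj⟩ : ∃ j, x.val = j + 1 := ⟨x.val - 1, by omega⟩
    have e2 := h2.2 j (by omega)
    have e1 := h1.2 (j + 1) (by omega)
    rw [show p + 1 + j = p + (j + 1) by omega, e1] at e2
    have ex : ((j + 1 : ℕ) : ZMod n) = x := by
      rw [← hj, ZMod.natCast_val, ZMod.cast_id]
    have ex1 : ((j + 1 + 1 : ℕ) : ZMod n) = x + 1 := by
      push_cast
      rw [show ((j:ZMod n) + 1) = ((j+1 : ℕ) : ZMod n) by push_cast; ring, ex]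
    rw [ex, ex1] at e2
    exact (Option.some_injective _ e2).symm
  have stepB : ρ' 0 = ρ 1 := by
    by_cases hy : ρ'.symm (ρ 1) = 0
    · conv_lhs => rw [← hy]
      simp
    · have := stepA _ hy
      rw [Equiv.apply_symm_apply] at this
      have : (1 : ZMod n) = ρ'.symm (ρ 1) + 1 := ρ.injective this
      have h0 : ρ'.symm (ρ 1) = 0 := by linear_combination -this
      exact absurd h0 hy
  ext x
  have hcyc : (cyc n) x = x + 1 := rfl
  show ρ' x = ρ (cyc n x)
  rw [hcyc]
  by_cases hx : x = 0
  · subst hx; rw [stepB]; norm_num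
  · exact stepA x hx

lemma incShift_mk (n : ℕ) (ρ : Equiv.Perm (ZMod n)) :
    incShift n (Quotient.mk (incSetoid n) ρ) = Quotient.mk (incSetoid n) (ρ * cyc n) := rfl

lemma incShift_iterate (n k : ℕ) (ρ : Equiv.Perm (ZMod n)) :
    (incShift n)^[k] (Quotient.mk (incSetoid n) ρ) =
      Quotient.mk (incSetoid n) (ρ * cyc n ^ k) := by
  induction k with
  | zero => simp; rfl
  | succ k ih =>
    have := Function.iterate_succ_apply' (incShift n) k (Quotient.mk (incSetoid n) ρ)
    rw [this, ih, incShift_mk, pow_succ, mul_assoc]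

lemma incShift_iterate_n (n : ℕ) (q : IncClasses n) : (incShift n)^[n] q = q := by
  induction q using Quotient.inductionOn with
  | h ρ => rw [incShift_iterate, cyc_pow_n, mul_one]

lemma incShift_iterate_n_mul (n a : ℕ) (q : IncClasses n) : (incShift n)^[n * a] q = q := by
  induction a with
  | zero => simp
  | succ a ih => rw [Nat.mul_succ, Function.iterate_add_apply, incShift_iterate_n, ih]

lemma mem_oneCycle_self (n : ℕ) (q : IncClasses n) : q ∈ oneCycle n q := ⟨0, rfl⟩

lemma oneCycle_subset_of_mem {n : ℕ} {q q' : IncClasses n} (h : q' ∈ oneCycle n q) :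
    oneCycle n q' ⊆ oneCycle n q := by
  obtain ⟨a, rfl⟩ := h
  rintro x ⟨b, rfl⟩
  exact ⟨b + a, by simp only []; rw [Function.iterate_add_apply]⟩

lemma oneCycle_eq_of_mem {n : ℕ} (hn : 1 ≤ n) {q q' : IncClasses n}
    (h : q' ∈ oneCycle n q) : oneCycle n q' = oneCycle n q := by
  refine subset_antisymm (oneCycle_subset_of_mem h) (oneCycle_subset_of_mem ?_)
  obtain ⟨a, rfl⟩ := h
  refine ⟨a * (n - 1), ?_⟩
  simp only []
  rw [← Function.iterate_add_apply]
  have : a * (n - 1) + a = n * a := by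
    cases n with
    | zero => omega
    | succ m => simp [Nat.succ_sub_one]; ring
  rw [this, incShift_iterate_n_mul]

lemma oneCycle_ncard_mem_divisors {n : ℕ} (hn : 1 ≤ n) (q : IncClasses n) :
    (oneCycle n q).ncard ∈ n.divisors := by
  classical
  set T := incShift n
  have hper : Function.IsPeriodicPt T n q := incShift_iterate_n n q
  set m := Function.minimalPeriod T q with hm
  have hdvd : m ∣ n := hper.minimalPeriod_dvd
  have hpos : 0 < m := hper.minimalPeriod_pos (by omega)
  have hset : oneCycle n q = ↑((Finset.range m).image fun i => T^[i] q) := by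
    ext x
    simp only [oneCycle, Set.mem_range, Finset.coe_image, Set.mem_image, Finset.mem_coe,
      Finset.mem_range]
    constructor
    · rintro ⟨i, rfl⟩
      exact ⟨i % m, Nat.mod_lt _ hpos, Function.iterate_mod_minimalPeriod_eq⟩
    · rintro ⟨i, _, rfl⟩
      exact ⟨i, rfl⟩
  have hcard : (oneCycle n q).ncard = m := by
    rw [hset, Set.ncard_coe_finset, Finset.card_image_of_injOn, Finset.card_range]
    intro i hi j hj hij
    exact Function.iterate_injOn_Iio_minimalPeriod
      (by simpa using Finset.mem_range.mp hi) (by simpa using Finset.mem_range.mp hj) hij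
  rw [hcard, Nat.mem_divisors]
  exact ⟨hdvd, by omega⟩

lemma sum_numCycles {n : ℕ} (hn : 1 ≤ n) (h𝒞 : (Set.range (oneCycle n)).Finite) :
    ∑ d ∈ n.divisors, numCycles n d = h𝒞.toFinset.card := by
  classical
  have key : ∀ d, numCycles n d = (h𝒞.toFinset.filter fun S => S.ncard = d).card := by
    intro d
    rw [numCycles, ← Set.ncard_coe_finset]
    congr 1
    ext S
    simp only [Finset.coe_filter, Set.Finite.mem_toFinset, Set.mem_range, Set.mem_setOf_eq]
    constructor
    · rintro ⟨⟨q, h⟩, h2⟩; exact ⟨⟨q, h.symm⟩, h2⟩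
    · rintro ⟨⟨q, h⟩, h2⟩; exact ⟨⟨q, h.symm⟩, h2⟩
  calc ∑ d ∈ n.divisors, numCycles n d
      = ∑ d ∈ n.divisors, (h𝒞.toFinset.filter fun S => S.ncard = d).card :=
        Finset.sum_congr rfl fun d _ => key d
    _ = h𝒞.toFinset.card := by
        refine (Finset.card_eq_sum_card_fiberwise ?_).symm
        intro S hS
        rw [Finset.mem_coe, Set.Finite.mem_toFinset] at hS
        obtain ⟨q, rfl⟩ := hS
        exact oneCycle_ncard_mem_divisors hn q

lemma infix_bind {α β : Type*} {a : α} {l : List α} (h : a ∈ l) (f : α → List β) :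
    f a <:+: l.flatMap f := by
  induction l with
  | nil => simp at h
  | cons b l ih =>
    rw [List.flatMap_cons]
    rcases List.mem_cons.mp h with rfl | h
    · exact ((f a).prefix_append _).isInfix
    · exact (ih h).trans (List.suffix_append _ _).isInfix

/-- For every `n ≥ 1`, `m(n) ≥ (n−1)! + n − 2 + Σ_{d ∣ n} c(d)`. -/
theorem stmt1 (n : ℕ) (hn : 1 ≤ n) :
    (n - 1).factorial + n - 2 + ∑ d ∈ n.divisors, numCycles n d ≤ mWord n := by
  classical
  haveI : NeZero n := ⟨by omega⟩
  haveI : Finite (IncClasses n) := Quotient.finite _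
  haveI : Fintype (IncClasses n) := Fintype.ofFinite _
  -- a universal word exists
  have hex : IsUniversalR2 n ((Finset.univ : Finset (Equiv.Perm (ZMod n))).toList.flatMap
      (oneLine n)) := by
    intro π
    exact ⟨π, ⟨0, by simp⟩, infix_bind (Finset.mem_toList.mpr (Finset.mem_univ π)) _⟩
  have hne : {k | ∃ w : List (ZMod n), w.length = k ∧ IsUniversalR2 n w}.Nonempty :=
    ⟨_, _, rfl, hex⟩
  obtain ⟨w, hwlen, hwu⟩ := Nat.sInf_mem hne
  have hmw : mWord n = w.length := hwlen.symm
  rw [hmw]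
  set L := w.length with hL
  -- choose a window for each class
  have hchoice : ∀ q : IncClasses n, ∃ pr : ℕ × Equiv.Perm (ZMod n),
      Quotient.mk (incSetoid n) pr.2 = q ∧ WinAt n w pr.1 pr.2 := by
    intro q
    induction q using Quotient.inductionOn with
    | h π =>
      obtain ⟨ρ, ⟨i, hi⟩, hinf⟩ := hwu π
      obtain ⟨p, hp⟩ := winAt_of_infix hinf
      exact ⟨(p, ρ), Quotient.sound (s := incSetoid n) ((incSetoid n).iseqv.symm ⟨i, hi⟩), hp⟩
  choose FR hFR0 hWin0 using hchoice
  set F : IncClasses n → ℕ := fun q => (FR q).1 with hF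
  set R : IncClasses n → Equiv.Perm (ZMod n) := fun q => (FR q).2 with hR
  have hFR : ∀ q, Quotient.mk (incSetoid n) (R q) = q := hFR0
  have hWin : ∀ q, WinAt n w (F q) (R q) := hWin0
  have Finj : Function.Injective F := by
    intro q q' h
    have h2 : WinAt n w (F q) (R q') := by rw [h]; exact hWin q'
    have hr : R q = R q' := winAt_inj hn (hWin q) h2
    rw [← hFR q, ← hFR q', hr]
  have Fle : ∀ q, F q + n ≤ L := fun q => (hWin q).1
  set A : Finset ℕ := Finset.univ.image F with hA
  have hAcard : A.card = (n - 1).factorial := by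
    rw [hA, Finset.card_image_of_injective _ Finj, Finset.card_univ,
      ← Nat.card_eq_fintype_card, card_IncClasses n hn]
  -- cycles
  have hfin : (Set.range (oneCycle n)).Finite := Set.finite_range _
  set 𝒞 : Finset (Set (IncClasses n)) := hfin.toFinset with h𝒞
  have hcycle_eq : ∀ S ∈ 𝒞, ∀ q ∈ S, oneCycle n q = S := by
    intro S hS q hq
    rw [h𝒞, Set.Finite.mem_toFinset] at hS
    obtain ⟨qS, rfl⟩ := hS
    exact oneCycle_eq_of_mem hn hq
  set gval : Set (IncClasses n) → ℕ := fun S => sInf (F '' S) with hgval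
  have k1 : ∀ S ∈ 𝒞, ∃ q ∈ S, F q = gval S := by
    intro S hS
    rw [h𝒞, Set.Finite.mem_toFinset] at hS
    obtain ⟨qS, rfl⟩ := hS
    have hne' : (F '' oneCycle n qS).Nonempty :=
      ⟨F qS, Set.mem_image_of_mem F (mem_oneCycle_self n qS)⟩
    obtain ⟨q, hq, hfq⟩ := Nat.sInf_mem hne'
    exact ⟨q, hq, hfq⟩
  have k2 : ∀ S ∈ 𝒞, ∀ S' ∈ 𝒞, gval S = gval S' → S = S' := by
    intro S hS S' hS' hgg
    obtain ⟨q, hq, hfq⟩ := k1 S hS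
    obtain ⟨q', hq', hfq'⟩ := k1 S' hS'
    have : q = q' := Finj (by rw [hfq, hfq', hgg])
    subst this
    rw [← hcycle_eq S hS q hq, ← hcycle_eq S' hS' q hq']
  have k3 : ∀ S ∈ 𝒞, 1 ≤ gval S → gval S - 1 ∉ A := by
    intro S hS hg1 hmem
    rw [hA, Finset.mem_image] at hmem
    obtain ⟨q', -, hq'⟩ := hmem
    obtain ⟨q₀, hq₀, hfq₀⟩ := k1 S hS
    have hsucc : F q' + 1 = F q₀ := by omega
    have hw2 : WinAt n w (F q' + 1) (R q₀) := by rw [hsucc]; exact hWin q₀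
    have hshift : R q₀ = R q' * cyc n := winAt_succ hn (hWin q') hw2
    have hq0q' : q₀ = incShift n q' := by
      rw [← hFR q₀, ← hFR q', hshift]
      rfl
    have hq₀mem : q₀ ∈ oneCycle n q' := ⟨1, by simp [hq0q']⟩
    have hS' : S = oneCycle n q' := by
      rw [← hcycle_eq S hS q₀ hq₀, oneCycle_eq_of_mem hn hq₀mem]
    have : gval S ≤ F q' := Nat.sInf_le ⟨q', by rw [hS']; exact mem_oneCycle_self n q', rfl⟩
    omega
  -- counting
  set 𝒞' := 𝒞.filter (fun S => 1 ≤ gval S) with h𝒞'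
  set B : Finset ℕ := 𝒞'.image (fun S => gval S - 1) with hB
  have hBcard : B.card = 𝒞'.card := by
    rw [hB]
    apply Finset.card_image_of_injOn
    intro S hS S' hS' hss
    simp only [h𝒞', Finset.coe_filter, Set.mem_setOf_eq] at hS hS'
    simp only [] at hss
    exact k2 S hS.1 S' hS'.1 (by omega)
  have h𝒞'card : 𝒞.card ≤ 𝒞'.card + 1 := by
    have hsplit : 𝒞'.card + (𝒞.filter fun S => ¬ 1 ≤ gval S).card = 𝒞.card := by
      rw [h𝒞']
      exact Finset.card_filter_add_card_filter_not (s := 𝒞) (p := fun S => 1 ≤ gval S)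
    have : (𝒞.filter fun S => ¬ 1 ≤ gval S).card ≤ 1 := by
      rw [Finset.card_le_one]
      intro S hS S' hS'
      rw [Finset.mem_filter] at hS hS'
      exact k2 S hS.1 S' hS'.1 (by omega)
    omega
  have hdisj : Disjoint A B := by
    rw [Finset.disjoint_right]
    intro x hx hxa
    rw [hB, Finset.mem_image] at hx
    obtain ⟨S, hS, rfl⟩ := hx
    rw [h𝒞', Finset.mem_filter] at hS
    exact k3 S hS.1 hS.2 hxa
  have hsub : A ∪ B ⊆ Finset.range (L - n + 1) := by
    intro x hx
    rw [Finset.mem_union] at hx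
    rw [Finset.mem_range]
    rcases hx with hx | hx
    · rw [hA, Finset.mem_image] at hx
      obtain ⟨q, -, rfl⟩ := hx
      have := Fle q
      omega
    · rw [hB, Finset.mem_image] at hx
      obtain ⟨S, hS, rfl⟩ := hx
      rw [h𝒞', Finset.mem_filter] at hS
      obtain ⟨q, -, hfq⟩ := k1 S hS.1
      have := Fle q
      omega
  have hcount : A.card + B.card ≤ L - n + 1 := by
    rw [← Finset.card_union_of_disjoint hdisj]
    calc (A ∪ B).card ≤ (Finset.range (L - n + 1)).card := Finset.card_le_card hsub
      _ = L - n + 1 := Finset.card_range _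
  -- nonemptiness facts
  have hq0 : Nonempty (IncClasses n) := ⟨Quotient.mk _ 1⟩
  obtain ⟨q0⟩ := hq0
  have h𝒞ne : 1 ≤ 𝒞.card := by
    rw [Nat.one_le_iff_ne_zero, ← Nat.pos_iff_ne_zero, Finset.card_pos]
    exact ⟨oneCycle n q0, by rw [h𝒞, Set.Finite.mem_toFinset]; exact ⟨q0, rfl⟩⟩
  have hnL : n ≤ L := by have := Fle q0; omega
  have hsum : ∑ d ∈ n.divisors, numCycles n d = 𝒞.card := sum_numCycles hn hfin
  have hfact : 1 ≤ (n - 1).factorial := Nat.one_le_iff_ne_zero.mpr (Nat.factorial_ne_zero _)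
  rw [hsum]
  omega
end

section
/- The ratio B'(n)/(n−1)! tends to 2 as n tends to infinity, where B'(n) = 1 + (n−1)! + (n−2)·Σ_{d | n} φ(n/d)·n^{d−1}·(d−1)!/d^d, the sum ranging over positive divisors d of n and φ denoting Euler's totient function. -/
open Filter Topology

/-- `B'(n) = 1 + (n−1)! + (n−2)·Σ_{d ∣ n} φ(n/d)·n^(d−1)·(d−1)!/d^d`, as a real number. -/
noncomputable def Bprime (n : ℕ) : ℝ :=
  1 + (n - 1).factorial +
    ((n : ℝ) - 2) *
      ∑ d ∈ n.divisors,
        (Nat.totient (n / d) : ℝ) * (n : ℝ) ^ (d - 1) * ((d - 1).factorial : ℝ) / (d : ℝ) ^ d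

noncomputable def Fterm (n d : ℕ) : ℝ :=
  (Nat.totient (n / d) : ℝ) * (n : ℝ) ^ (d - 1) * ((d - 1).factorial : ℝ) / (d : ℝ) ^ d

lemma Fterm_nonneg (n d : ℕ) : 0 ≤ Fterm n d := by unfold Fterm; positivity

lemma key_pow : ∀ᶠ n : ℕ in atTop, ∀ d : ℕ, 2 ≤ d → 2 * d ≤ n → (n:ℝ)^(d+4) ≤ (d:ℝ)^n := by
  have h15 : ∀ᶠ n : ℕ in atTop, (n:ℝ)^15 ≤ 2^n := by
    filter_upwards [(tendsto_pow_const_div_const_pow_of_one_lt 15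
      (by norm_num : (1:ℝ) < 2)).eventually_lt_const one_pos, eventually_ge_atTop 1] with n h hn
    have h2 : (0:ℝ) < 2^n := by positivity
    nlinarith [(div_lt_one h2).mp h]
  filter_upwards [h15, eventually_ge_atTop 16] with n h15n hn16 d hd2 hdn
  have hn1 : (1:ℝ) ≤ n := by exact_mod_cast (by omega : 1 ≤ n)
  by_cases hd : d ≤ 11
  · calc (n:ℝ)^(d+4) ≤ (n:ℝ)^15 := pow_le_pow_right₀ hn1 (by omega)
      _ ≤ 2^n := h15n
      _ ≤ (d:ℝ)^n := by
          apply pow_le_pow_left₀ (by norm_num)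
          exact_mod_cast hd2
  · have hd12 : (12:ℝ) ≤ d := by exact_mod_cast (by omega : 12 ≤ d)
    have hd0 : (0:ℝ) < d := by linarith
    have hn0 : (0:ℝ) < n := by linarith
    have hdn' : (d:ℝ) ≤ (n:ℝ)/2 := by
      have : (2*d : ℕ) ≤ n := hdn
      have : ((2*d : ℕ):ℝ) ≤ n := by exact_mod_cast this
      push_cast at this; linarith
    have he1 : Real.exp 1 ≤ (d:ℝ) := by
      have := Real.exp_one_lt_d9; linarith
    have he2 : Real.exp 1 ≤ (n:ℝ)/2 := he1.trans hdn'
    have hA := Real.log_div_self_antitoneOn he1 he2 hdn'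
    simp only at hA
    -- hA : log (n/2) / (n/2) ≤ log d / d
    have hlogd : 0 ≤ Real.log d := Real.log_nonneg (by linarith)
    have hl2 : 0 < Real.log 2 := Real.log_pos (by norm_num)
    have hln : 3 * Real.log 2 ≤ Real.log n := by
      rw [show (3:ℝ) * Real.log 2 = Real.log (2^3) by rw [Real.log_pow]; push_cast; ring]
      exact Real.log_le_log (by norm_num) (by norm_num; linarith)
    have hcross : Real.log ((n:ℝ)/2) * d ≤ Real.log d * ((n:ℝ)/2) := by
      rw [div_le_div_iff₀ (by linarith) hd0] at hA; linarith
    rw [Real.log_div (by linarith) (by norm_num)] at hcross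
    have hlog : ((d:ℝ)+4) * Real.log n ≤ (n:ℝ) * Real.log d := by nlinarith
    have hkey : Real.log ((n:ℝ)^(d+4)) ≤ Real.log ((d:ℝ)^n) := by
      rw [Real.log_pow, Real.log_pow]; push_cast; linarith
    exact (Real.log_le_log_iff (by positivity) (by positivity)).mp hkey

lemma Fterm_le : ∀ᶠ n : ℕ in atTop, ∀ d ∈ n.divisors.erase n,
    Fterm n d ≤ (n:ℝ) + ((n-1).factorial : ℝ)/(n:ℝ)^4 := by
  filter_upwards [key_pow, eventually_ge_atTop 1] with n hkey hn1 d hd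
  have hfact_nonneg : (0:ℝ) ≤ ((n-1).factorial : ℝ)/(n:ℝ)^4 := by positivity
  obtain ⟨hdne, hdmem⟩ := Finset.mem_erase.mp hd
  rw [Nat.mem_divisors] at hdmem
  obtain ⟨hdvd, hn0⟩ := hdmem
  have hd1 : 1 ≤ d := Nat.pos_of_dvd_of_pos hdvd (by omega)
  have h2d : 2 * d ≤ n := by
    obtain ⟨c, rfl⟩ := hdvd
    have hc1 : c ≠ 1 := by rintro rfl; simp at hdne
    have hc0 : c ≠ 0 := by rintro rfl; simp at hn0
    have : 2 ≤ c := by omega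
    calc 2 * d = d * 2 := by ring
      _ ≤ d * c := by exact Nat.mul_le_mul_left d this
  by_cases hd2 : d = 1
  · subst hd2
    have : Fterm n 1 = (Nat.totient n : ℝ) := by
      simp [Fterm]
    rw [this]
    have : (Nat.totient n : ℝ) ≤ (n:ℝ) := by exact_mod_cast Nat.totient_le n
    linarith
  · have hd2' : 2 ≤ d := by omega
    have hkeyd := hkey d hd2' h2d
    -- nat version of key
    have hkeyn : n^(d+4) ≤ d^n := by exact_mod_cast hkeyd
    -- main nat inequality
    have hnat : Nat.totient (n/d) * n^(d-1) * (d-1).factorial * n^4 ≤ (n-1).factorial * d^d := by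
      have h1 : Nat.totient (n/d) ≤ n := (Nat.totient_le _).trans (Nat.div_le_self n d)
      have h2 : (d-1).factorial * d^(n-d) ≤ (n-1).factorial := by
        have := @Nat.factorial_mul_pow_le_factorial (d-1) (n-d)
        have e1 : d - 1 + 1 = d := by omega
        have e2 : d - 1 + (n - d) = n - 1 := by omega
        rwa [e1, e2] at this
      calc Nat.totient (n/d) * n^(d-1) * (d-1).factorial * n^4
          ≤ n * n^(d-1) * (d-1).factorial * n^4 := by
            apply Nat.mul_le_mul_right
            apply Nat.mul_le_mul_right
            exact Nat.mul_le_mul_right _ h1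
        _ = n^(d+4) * (d-1).factorial := by
            rw [show d + 4 = 1 + (d-1) + 4 by omega, pow_add, pow_add, pow_one]; ring
        _ ≤ d^n * (d-1).factorial := Nat.mul_le_mul_right _ hkeyn
        _ = (d-1).factorial * d^(n-d) * d^d := by
            conv_lhs => rw [show n = (n - d) + d by omega]
            rw [pow_add]; ring
        _ ≤ (n-1).factorial * d^d := Nat.mul_le_mul_right _ h2
    have hreal : (Nat.totient (n/d) : ℝ) * (n:ℝ)^(d-1) * ((d-1).factorial : ℝ) * (n:ℝ)^4
        ≤ ((n-1).factorial : ℝ) * (d:ℝ)^d := by exact_mod_cast hnat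
    have hstep : Fterm n d ≤ ((n-1).factorial : ℝ)/(n:ℝ)^4 := by
      rw [Fterm, div_le_div_iff₀ (by positivity) (by positivity)]
      linarith
    have hn0' : (0:ℝ) ≤ n := by positivity
    linarith

lemma two_pow_le_fact (m : ℕ) : 2^m ≤ (m+1).factorial := by
  induction m with
  | zero => simp
  | succ k ih =>
      rw [pow_succ, Nat.factorial_succ]
      calc 2^k * 2 ≤ (k+1).factorial * 2 := Nat.mul_le_mul_right _ ih
        _ ≤ (k+1).factorial * (k+2) := Nat.mul_le_mul_left _ (by omega)
        _ = (k+2) * (k+1).factorial := by ring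

lemma card_divisors_le (n : ℕ) : n.divisors.card ≤ n := by
  have hsub : n.divisors ⊆ Finset.Ico 1 (n+1) := by
    intro d hd
    rw [Nat.mem_divisors] at hd
    have h1 : 1 ≤ d := Nat.pos_of_dvd_of_pos hd.1 (Nat.pos_of_ne_zero hd.2)
    have h2 : d ≤ n := Nat.le_of_dvd (Nat.pos_of_ne_zero hd.2) hd.1
    rw [Finset.mem_Ico]; omega
  calc n.divisors.card ≤ (Finset.Ico 1 (n+1)).card := Finset.card_le_card hsub
    _ = n := by simp

/-- `B'(n)/(n−1)! → 2` as `n → ∞`. -/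
theorem stmt3 :
    Tendsto (fun n : ℕ => Bprime n / ((n - 1).factorial : ℝ)) atTop (𝓝 2) := by
  set T : ℕ → ℝ := fun n => ∑ d ∈ n.divisors.erase n, Fterm n d with hT
  have hEq : ∀ᶠ n : ℕ in atTop, Bprime n / ((n - 1).factorial : ℝ) =
      1/(((n-1).factorial : ℝ)) + 1 + ((n:ℝ)-2)/n
        + ((n:ℝ)-2) * T n / ((n-1).factorial : ℝ) := by
    filter_upwards [eventually_ge_atTop 1] with n hn
    have hn0 : n ≠ 0 := by omega
    have hnR : (0:ℝ) < n := by exact_mod_cast Nat.pos_of_ne_zero hn0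
    have hK : (0:ℝ) < ((n-1).factorial : ℝ) := by exact_mod_cast (n-1).factorial_pos
    have hFnn : Fterm n n = ((n-1).factorial : ℝ) / n := by
      have hpow : (n:ℝ)^n = (n:ℝ)^(n-1) * n := by
        rw [← pow_succ]
        congr 1
        omega
      rw [Fterm, Nat.div_self (Nat.pos_of_ne_zero hn0), Nat.totient_one, hpow]
      have hne : ((n:ℝ)^(n-1)) ≠ 0 := by positivity
      rw [Nat.cast_one, one_mul, mul_div_mul_left _ _ hne]
    have hsum : ∑ d ∈ n.divisors, Fterm n d = T n + ((n-1).factorial : ℝ)/n := by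
      rw [hT]
      rw [← Finset.sum_erase_add _ _ (Nat.mem_divisors_self n hn0), hFnn]
    have hBp : Bprime n = 1 + ((n-1).factorial : ℝ)
        + ((n:ℝ)-2) * (T n + ((n-1).factorial : ℝ)/n) := by
      rw [Bprime, ← hsum]; rfl
    rw [hBp]
    field_simp
    ring
  rw [show (2:ℝ) = 0 + 1 + 1 + 0 by norm_num]
  apply Tendsto.congr' (Filter.EventuallyEq.symm hEq)
  have T1 : Tendsto (fun n : ℕ => 1/(((n-1).factorial : ℝ))) atTop (𝓝 0) := by
    have hf : Tendsto (fun n : ℕ => (((n-1).factorial : ℝ))) atTop atTop :=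
      tendsto_natCast_atTop_atTop.comp
        (factorial_tendsto_atTop.comp (tendsto_sub_atTop_nat 1))
    simpa [one_div, Pi.inv_def] using hf.inv_tendsto_atTop
  have T3 : Tendsto (fun n : ℕ => ((n:ℝ)-2)/n) atTop (𝓝 1) := by
    have h : Tendsto (fun n : ℕ => 1 - 2/(n:ℝ)) atTop (𝓝 (1 - 0)) :=
      tendsto_const_nhds.sub (tendsto_const_div_atTop_nhds_zero_nat 2)
    rw [sub_zero] at h
    apply h.congr'
    filter_upwards [eventually_ge_atTop 1] with n hn
    have hnR : (0:ℝ) < n := by exact_mod_cast hn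
    field_simp
  have T4 : Tendsto (fun n : ℕ => ((n:ℝ)-2) * T n / ((n-1).factorial : ℝ)) atTop (𝓝 0) := by
    apply squeeze_zero' (g := fun n : ℕ => 4*((n:ℝ)^3/2^n) + 1/(n:ℝ)^2)
    · filter_upwards [eventually_ge_atTop 2] with n hn
      have h2 : (0:ℝ) ≤ (n:ℝ) - 2 := by
        have : (2:ℝ) ≤ n := by exact_mod_cast hn
        linarith
      have hTn : 0 ≤ T n := Finset.sum_nonneg fun d _ => Fterm_nonneg n d
      positivity
    · filter_upwards [Fterm_le, eventually_ge_atTop 2] with n hF hn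
      have hnR : (0:ℝ) < n := by exact_mod_cast (by omega : 0 < n)
      have hK : (0:ℝ) < ((n-1).factorial : ℝ) := by exact_mod_cast (n-1).factorial_pos
      set B : ℝ := (n:ℝ) + ((n-1).factorial : ℝ)/(n:ℝ)^4 with hB
      have hB0 : 0 ≤ B := by positivity
      have hTle : T n ≤ (n:ℝ) * B := by
        calc T n ≤ (n.divisors.erase n).card • B := Finset.sum_le_card_nsmul _ _ _ hF
          _ = ((n.divisors.erase n).card : ℝ) * B := by rw [nsmul_eq_mul]
          _ ≤ (n:ℝ) * B := by
              apply mul_le_mul_of_nonneg_right _ hB0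
              have : (n.divisors.erase n).card ≤ n :=
                le_trans (Finset.card_le_card (Finset.erase_subset _ _)) (card_divisors_le n)
              exact_mod_cast this
      have hTn : 0 ≤ T n := Finset.sum_nonneg fun d _ => Fterm_nonneg n d
      have h2 : (0:ℝ) ≤ (n:ℝ) - 2 := by
        have : (2:ℝ) ≤ n := by exact_mod_cast hn
        linarith
      have step1 : ((n:ℝ)-2) * T n / ((n-1).factorial : ℝ)
          ≤ (n:ℝ) * ((n:ℝ) * B) / ((n-1).factorial : ℝ) := by
        gcongr
        linarith
      have step2 : (n:ℝ) * ((n:ℝ) * B) / ((n-1).factorial : ℝ)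
          = (n:ℝ)^3 / ((n-1).factorial : ℝ) + 1/(n:ℝ)^2 := by
        rw [hB]; field_simp
      have hfac : (2:ℝ)^n ≤ 4 * ((n-1).factorial : ℝ) := by
        have h1 : 2^(n-2) ≤ (n-1).factorial := by
          have := two_pow_le_fact (n-2)
          rwa [show n-2+1 = n-1 by omega] at this
        have h1' : (2:ℝ)^(n-2) ≤ ((n-1).factorial : ℝ) := by exact_mod_cast h1
        have h4 : (2:ℝ)^n = 2^(n-2) * 2^2 := by
          rw [← pow_add]
          congr 1
          omega
        rw [h4]
        norm_num
        linarith
      have step3 : (n:ℝ)^3 / ((n-1).factorial : ℝ) ≤ 4 * ((n:ℝ)^3/2^n) := by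
        rw [show 4*((n:ℝ)^3/2^n) = (4*(n:ℝ)^3)/2^n by ring,
          div_le_div_iff₀ hK (by positivity)]
        have := mul_le_mul_of_nonneg_left hfac (show (0:ℝ) ≤ (n:ℝ)^3 by positivity)
        nlinarith
      calc ((n:ℝ)-2) * T n / ((n-1).factorial : ℝ)
          ≤ (n:ℝ)^3 / ((n-1).factorial : ℝ) + 1/(n:ℝ)^2 := by rw [← step2]; exact step1
        _ ≤ 4*((n:ℝ)^3/2^n) + 1/(n:ℝ)^2 := by linarith
    · have g1 : Tendsto (fun n : ℕ => 4*((n:ℝ)^3/2^n)) atTop (𝓝 (4*0)) :=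
        (tendsto_pow_const_div_const_pow_of_one_lt 3 (by norm_num : (1:ℝ) < 2)).const_mul 4
      have g2 : Tendsto (fun n : ℕ => 1/(n:ℝ)^2) atTop (𝓝 0) := by
        have : Tendsto (fun n : ℕ => ((n:ℝ)^2)) atTop atTop :=
          (tendsto_pow_atTop (by norm_num)).comp tendsto_natCast_atTop_atTop
        simpa [one_div, Pi.inv_def] using this.inv_tendsto_atTop
      simpa using g1.add g2
  exact ((T1.add tendsto_const_nhds).add T3).add T4
end

section
/- Let d be a positive divisor of n and set p = n/d. The number of permutations π of ℤ/nℤ with π(0) = 0 for which there exists k ∈ ℤ/nℤ such that π(i+d) = π(i) + k for all i ∈ ℤ/nℤ equals φ(p)·p^{d−1}·(d−1)!, where φ is Euler's totient function. -/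
namespace Stmt7Aux

variable (n d p : ℕ) [NeZero n] [NeZero d] [NeZero p]

/-- key mod lemma -/
lemma aux_mod (hnp : n = d * p) (x : ℕ) :
    (((x % p) * d : ℕ) : ZMod n) = ((x * d : ℕ) : ZMod n) := by
  conv_rhs => rw [← Nat.div_add_mod x p]
  have h : (p * (x / p) + x % p) * d = (x / p) * n + (x % p) * d := by rw [hnp]; ring
  rw [h]
  push_cast [ZMod.natCast_self]
  ring

/-- The decomposition map. -/
def e (jm : ZMod d × ZMod p) : ZMod n := ((jm.1.val + jm.2.val * d : ℕ) : ZMod n)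

lemma e_inj (hnp : n = d * p) : Function.Injective (e n d p) := by
  rintro ⟨j, m⟩ ⟨j', m'⟩ h
  have hd' : 0 < d := Nat.pos_of_ne_zero (NeZero.ne d)
  have hlt : ∀ (a : ZMod d) (b : ZMod p), a.val + b.val * d < n := by
    intro a b
    have h1 : a.val < d := ZMod.val_lt a
    have h2 : b.val < p := ZMod.val_lt b
    calc a.val + b.val * d < d + b.val * d := by omega
      _ = (b.val + 1) * d := by ring
      _ ≤ p * d := Nat.mul_le_mul_right d (Nat.succ_le_of_lt h2)
      _ = n := by rw [hnp]; ring
  have hh := (ZMod.natCast_eq_natCast_iff' _ _ _).mp h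
  rw [Nat.mod_eq_of_lt (hlt j m), Nat.mod_eq_of_lt (hlt j' m')] at hh
  have hj : j.val = j'.val := by
    have := congrArg (· % d) hh
    simpa [Nat.add_mul_mod_self_right, Nat.mod_eq_of_lt (ZMod.val_lt j),
      Nat.mod_eq_of_lt (ZMod.val_lt j')] using this
  have hm : m.val = m'.val :=
    Nat.eq_of_mul_eq_mul_right hd' (by omega : m.val * d = m'.val * d)
  ext
  · exact ZMod.val_injective d hj
  · exact ZMod.val_injective p hm

/-- The decomposition equivalence. -/
noncomputable def eE (hnp : n = d * p) : (ZMod d × ZMod p) ≃ ZMod n :=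
  Equiv.ofBijective (e n d p)
    ((Fintype.bijective_iff_injective_and_card _).2 ⟨e_inj n d p hnp, by
      simp [ZMod.card, hnp]⟩)

lemma eE_apply (hnp : n = d * p) (jm : ZMod d × ZMod p) : eE n d p hnp jm = e n d p jm := rfl

omit [NeZero n] [NeZero d] [NeZero p] in
lemma e_zero : e n d p (0, 0) = 0 := by simp [e]

lemma e_shift (hnp : n = d * p) (j : ZMod d) (m c : ZMod p) :
    e n d p (j, m + c) = e n d p (j, m) + ((c.val * d : ℕ) : ZMod n) := by
  show ((j.val + (m + c).val * d : ℕ) : ZMod n) = _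
  rw [ZMod.val_add]
  calc ((j.val + ((m.val + c.val) % p) * d : ℕ) : ZMod n)
      = (j.val : ZMod n) + ((((m.val + c.val) % p) * d : ℕ) : ZMod n) := by push_cast; ring
    _ = (j.val : ZMod n) + (((m.val + c.val) * d : ℕ) : ZMod n) := by
        rw [aux_mod n d p hnp]
    _ = _ := by show _ = ((j.val + m.val * d : ℕ) : ZMod n) + _; push_cast; ring

lemma e_dd (hnp : n = d * p) (j : ZMod d) (m : ZMod p) :
    e n d p (j, m + 1) = e n d p (j, m) + (d : ZMod n) := by
  rw [e_shift n d p hnp]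
  congr 1
  have h1 : (1 : ZMod p).val = 1 % p := ZMod.val_one_eq_one_mod p
  rw [h1, aux_mod n d p hnp 1, one_mul]


lemma e_snd (x : ZMod p) : e n d p (0, x) = ((x.val * d : ℕ) : ZMod n) := by
  simp [e]

/-- shear equivalence -/
def shear (c : (ZMod p)ˣ) (σ : Equiv.Perm (ZMod d)) (a : ZMod d → ZMod p) :
    (ZMod d × ZMod p) ≃ (ZMod d × ZMod p) :=
  Equiv.prodShear σ (fun j => (Units.mulRight c).trans (Equiv.addLeft (a j)))

lemma shear_apply (c : (ZMod p)ˣ) (σ : Equiv.Perm (ZMod d)) (a : ZMod d → ZMod p)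
    (j : ZMod d) (m : ZMod p) : shear d p c σ a (j, m) = (σ j, a j + m * c) := rfl

/-- The full permutation -/
noncomputable def Phi (hnp : n = d * p) (c : (ZMod p)ˣ) (σ : Equiv.Perm (ZMod d))
    (a : ZMod d → ZMod p) : Equiv.Perm (ZMod n) :=
  ((eE n d p hnp).symm.trans (shear d p c σ a)).trans (eE n d p hnp)

lemma Phi_apply (hnp : n = d * p) (c : (ZMod p)ˣ) (σ : Equiv.Perm (ZMod d))
    (a : ZMod d → ZMod p) (j : ZMod d) (m : ZMod p) :
    Phi n d p hnp c σ a (e n d p (j, m)) = e n d p (σ j, a j + m * c) := by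
  have h1 : (eE n d p hnp).symm (e n d p (j, m)) = (j, m) :=
    (eE n d p hnp).symm_apply_apply (j, m)
  simp only [Phi, Equiv.trans_apply, h1, shear_apply, eE_apply]

lemma Phi_mem (hnp : n = d * p) (c : (ZMod p)ˣ) (σ : Equiv.Perm (ZMod d))
    (a : ZMod d → ZMod p) (hσ : σ 0 = 0) (ha : a 0 = 0) :
    Phi n d p hnp c σ a 0 = 0 ∧
      ∀ i : ZMod n, Phi n d p hnp c σ a (i + (d : ZMod n)) =
        Phi n d p hnp c σ a i + e n d p (0, (c : ZMod p)) := by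
  constructor
  · have h0 : (0 : ZMod n) = e n d p (0, 0) := (e_zero n d p).symm
    rw [h0, Phi_apply, hσ, ha]
    simp [e_zero]
  · intro i
    obtain ⟨⟨j, m⟩, rfl⟩ := (eE n d p hnp).surjective i
    rw [eE_apply, ← e_dd n d p hnp, Phi_apply, Phi_apply]
    have : a j + (m + 1) * c = (a j + m * c) + (c : ZMod p) := by ring
    rw [this, e_shift n d p hnp, e_snd]

lemma Phi_inj (hnp : n = d * p) : Function.Injective
    (fun t : (ZMod p)ˣ × Equiv.Perm (ZMod d) × (ZMod d → ZMod p) =>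
      Phi n d p hnp t.1 t.2.1 t.2.2) := by
  rintro ⟨c, σ, a⟩ ⟨c', σ', a'⟩ h
  simp only at h
  have key : ∀ j m, (σ j, a j + m * (c : ZMod p)) = (σ' j, a' j + m * (c' : ZMod p)) := by
    intro j m
    apply e_inj n d p hnp
    rw [← Phi_apply n d p hnp c σ a, ← Phi_apply n d p hnp c' σ' a', h]
  have hσ : σ = σ' := Equiv.ext fun j => congrArg Prod.fst (key j 0)
  have ha : a = a' := funext fun j => by
    have := congrArg Prod.snd (key j 0); simpa using this
  have hc : c = c' := by
    have h1 := congrArg Prod.snd (key 0 1)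
    rw [ha] at h1
    simp only [one_mul] at h1
    exact Units.ext (add_left_cancel h1)
  simp [hσ, ha, hc]


lemma Phi_surj (hnp : n = d * p) (π : Equiv.Perm (ZMod n)) (h0 : π 0 = 0)
    (k : ZMod n) (hk : ∀ i : ZMod n, π (i + (d : ZMod n)) = π i + k) :
    ∃ (c : (ZMod p)ˣ) (σ : Equiv.Perm (ZMod d)) (a : ZMod d → ZMod p),
      σ 0 = 0 ∧ a 0 = 0 ∧ Phi n d p hnp c σ a = π := by
  have hd' : 0 < d := Nat.pos_of_ne_zero (NeZero.ne d)
  have hp' : 0 < p := Nat.pos_of_ne_zero (NeZero.ne p)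
  -- iteration lemma
  have hiter : ∀ (t : ℕ) (x : ZMod n), π (x + ((t * d : ℕ) : ZMod n)) = π x + (t : ZMod n) * k := by
    intro t
    induction t with
    | zero => intro x; simp
    | succ t ih =>
      intro x
      have h1 : (((t + 1) * d : ℕ) : ZMod n) = ((t * d : ℕ) : ZMod n) + (d : ZMod n) := by
        push_cast; ring
      rw [h1, ← add_assoc, hk, ih]
      push_cast; ring
  -- p * k = 0
  have hpk : ((p * k.val : ℕ) : ZMod n) = 0 := by
    have h3 : (p : ZMod n) * k = 0 := by
      have h1 := hiter p 0
      have h2 : ((p * d : ℕ) : ZMod n) = 0 := by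
        have hpd : p * d = n := by rw [hnp]; ring
        rw [hpd, ZMod.natCast_self]
      rw [h2, add_zero, h0, zero_add] at h1
      exact h1.symm
    push_cast [ZMod.natCast_val, ZMod.cast_id]
    exact h3
  have hdvdk : d ∣ k.val := by
    have h1 : n ∣ p * k.val := (ZMod.natCast_eq_zero_iff _ _).mp hpk
    have h2 : p * d ∣ p * k.val := by
      rwa [show p * d = n by rw [hnp]; ring]
    exact (mul_dvd_mul_iff_left (by omega : p ≠ 0)).mp h2
  set cn : ℕ := k.val / d with hcn
  have hcnd : cn * d = k.val := Nat.div_mul_cancel hdvdk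
  have hcnlt : cn < p := by
    have hkv : k.val < d * p := by rw [← hnp]; exact ZMod.val_lt k
    exact Nat.div_lt_of_lt_mul hkv
  set c0 : ZMod p := (cn : ZMod p) with hc0
  have hc0val : c0.val = cn := ZMod.val_cast_of_lt hcnlt
  have hkc : ((c0.val * d : ℕ) : ZMod n) = k := by
    rw [hc0val, hcnd]
    simp [ZMod.natCast_val, ZMod.cast_id]
  -- the coset data
  set y : ZMod d → ZMod d × ZMod p := fun j => (eE n d p hnp).symm (π (e n d p (j, 0))) with hy
  have hey : ∀ j, e n d p (y j) = π (e n d p (j, 0)) := fun j =>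
    (eE n d p hnp).apply_symm_apply _
  -- key structural formula
  have hstar : ∀ (j : ZMod d) (m : ZMod p),
      π (e n d p (j, m)) = e n d p ((y j).1, (y j).2 + m * c0) := by
    intro j m
    have h1 : e n d p (j, m) = e n d p (j, 0) + ((m.val * d : ℕ) : ZMod n) := by
      have := e_shift n d p hnp j 0 m
      rwa [zero_add] at this
    have h2 : π (e n d p (j, m)) = π (e n d p (j, 0)) + (m.val : ZMod n) * k := by
      rw [h1]
      exact hiter m.val _
    rw [h2, ← hey j]
    have h3 : e n d p ((y j).1, (y j).2 + m * c0)
        = e n d p (y j) + (((m * c0).val * d : ℕ) : ZMod n) := by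
      have := e_shift n d p hnp (y j).1 (y j).2 (m * c0)
      rwa [← Prod.mk.eta (p := y j)] at this
    rw [h3]
    congr 1
    -- (m * c0).val * d ≡ m.val * k
    rw [ZMod.val_mul, aux_mod n d p hnp, hc0val]
    rw [show m.val * cn * d = m.val * (cn * d) by ring, hcnd]
    push_cast [ZMod.natCast_val, ZMod.cast_id]
    rfl
  -- y 0 = 0
  have hy0 : y 0 = (0, 0) := by
    apply (eE n d p hnp).injective
    rw [Equiv.apply_symm_apply, e_zero, eE_apply, e_zero, h0]
  -- c0 is a unit
  have hinjc : Function.Injective (fun m : ZMod p => m * c0) := by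
    intro m m' hmm
    have hmm' : m * c0 = m' * c0 := hmm
    have h1 : π (e n d p (0, m)) = π (e n d p (0, m')) := by
      rw [hstar, hstar, hy0, hmm']
    have h2 := e_inj n d p hnp (π.injective h1)
    exact (Prod.mk.injEq _ _ _ _).mp h2 |>.2
  have hc0unit : IsUnit c0 := by
    obtain ⟨b, hb⟩ := (Finite.injective_iff_surjective.mp hinjc) 1
    exact IsUnit.of_mul_eq_one b (by rw [mul_comm]; exact hb)
  set c : (ZMod p)ˣ := hc0unit.unit with hcdef
  have hcc : (c : ZMod p) = c0 := hc0unit.unit_spec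
  -- σ0 injective
  have hσinj : Function.Injective (fun j => (y j).1) := by
    intro j j' hjj
    simp only at hjj
    set m' : ZMod p := ((y j).2 - (y j').2) * (c⁻¹ : (ZMod p)ˣ) with hm'
    have hinv : ((c⁻¹ : (ZMod p)ˣ) : ZMod p) * (c : ZMod p) = 1 := by
      rw [← Units.val_mul]; simp
    have h1 : (y j').2 + m' * c0 = (y j).2 + 0 * c0 := by
      rw [hm', ← hcc]
      calc (y j').2 + ((y j).2 - (y j').2) * ((c⁻¹ : (ZMod p)ˣ) : ZMod p) * (c : ZMod p)
          = (y j').2 + ((y j).2 - (y j').2) * (((c⁻¹ : (ZMod p)ˣ) : ZMod p) * (c : ZMod p)) := by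
            ring
        _ = (y j).2 + 0 * (c : ZMod p) := by rw [hinv]; ring
    have h2 : π (e n d p (j, 0)) = π (e n d p (j', m')) := by
      rw [hstar, hstar, hjj, h1]
    have h3 := e_inj n d p hnp (π.injective h2)
    exact ((Prod.mk.injEq _ _ _ _).mp h3).1
  set σ : Equiv.Perm (ZMod d) :=
    Equiv.ofBijective _ (Finite.injective_iff_bijective.mp hσinj) with hσdef
  refine ⟨c, σ, fun j => (y j).2, ?_, ?_, ?_⟩
  · show (y 0).1 = 0
    rw [hy0]
  · show (y 0).2 = 0
    rw [hy0]
  · apply Equiv.ext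
    intro x
    obtain ⟨⟨j, m⟩, rfl⟩ := (eE n d p hnp).surjective x
    rw [eE_apply, Phi_apply, hstar]
    rfl

end Stmt7Aux

open Stmt7Aux in
/-- Let `d` be a positive divisor of `n ≥ 1` and `p = n/d`.  The number of permutations `π`
of `ℤ/nℤ` with `π(0) = 0` for which there exists `k ∈ ℤ/nℤ` with `π(i+d) = π(i) + k` for all
`i` equals `φ(p)·p^(d−1)·(d−1)!`. -/
theorem stmt7 (n d : ℕ) (hn : 1 ≤ n) (hd : 0 < d) (hdvd : d ∣ n) :
    Set.ncard {π : Equiv.Perm (ZMod n) |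
        π 0 = 0 ∧ ∃ k : ZMod n, ∀ i : ZMod n, π (i + (d : ZMod n)) = π i + k} =
      Nat.totient (n / d) * (n / d) ^ (d - 1) * (d - 1).factorial := by
  haveI : NeZero n := ⟨by omega⟩
  haveI : NeZero d := ⟨by omega⟩
  have hp : 0 < n / d := Nat.div_pos (Nat.le_of_dvd (by omega) hdvd) hd
  haveI : NeZero (n / d) := ⟨by omega⟩
  set p := n / d with hpdef
  have hnp : n = d * p := (Nat.mul_div_cancel' hdvd).symm
  set S := {π : Equiv.Perm (ZMod n) |
      π 0 = 0 ∧ ∃ k : ZMod n, ∀ i : ZMod n, π (i + (d : ZMod n)) = π i + k} with hS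
  have hmem : ∀ (c : (ZMod p)ˣ) (σ : Equiv.Perm (ZMod d)) (a : ZMod d → ZMod p),
      σ 0 = 0 → a 0 = 0 → Phi n d p hnp c σ a ∈ S := by
    intro c σ a hσ ha
    obtain ⟨m1, m2⟩ := Phi_mem n d p hnp c σ a hσ ha
    exact ⟨m1, e n d p (0, (c : ZMod p)), m2⟩
  set T := (ZMod p)ˣ × {σ : Equiv.Perm (ZMod d) // σ 0 = 0} ×
    {a : ZMod d → ZMod p // a 0 = 0} with hT
  set F : T → S := fun t => ⟨Phi n d p hnp t.1 t.2.1.1 t.2.2.1,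
    hmem t.1 t.2.1.1 t.2.2.1 t.2.1.2 t.2.2.2⟩ with hF
  have hbij : Function.Bijective F := by
    constructor
    · rintro ⟨c, ⟨σ, hσ⟩, ⟨a, ha⟩⟩ ⟨c', ⟨σ', hσ'⟩, ⟨a', ha'⟩⟩ h
      have h2 : Phi n d p hnp c σ a = Phi n d p hnp c' σ' a' := congrArg Subtype.val h
      have h3 : ((c, σ, a) : (ZMod p)ˣ × Equiv.Perm (ZMod d) × (ZMod d → ZMod p))
          = (c', σ', a') := Phi_inj n d p hnp h2
      simp only [Prod.mk.injEq] at h3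
      exact Prod.ext h3.1 (Prod.ext (Subtype.ext h3.2.1) (Subtype.ext h3.2.2))
    · rintro ⟨π, h0, k, hk⟩
      obtain ⟨c, σ, a, hσ, ha, heq⟩ := Phi_surj n d p hnp π h0 k hk
      exact ⟨(c, ⟨σ, hσ⟩, ⟨a, ha⟩), Subtype.ext heq⟩
  rw [← Nat.card_coe_set_eq, Nat.card_congr (Equiv.ofBijective F hbij).symm]
  rw [hT, Nat.card_prod, Nat.card_prod]
  -- cardinality of each factor
  have h1 : Nat.card (ZMod p)ˣ = Nat.totient p := by
    rw [Nat.card_eq_fintype_card, ZMod.card_units_eq_totient]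
  have hsub : Fintype.card {x : ZMod d // x ≠ 0} = d - 1 := by
    have hcc := Fintype.card_subtype_compl (fun x : ZMod d => x = 0)
    rw [Fintype.card_subtype_eq (0 : ZMod d), ZMod.card] at hcc
    exact hcc
  have h2 : Nat.card {σ : Equiv.Perm (ZMod d) // σ 0 = 0} = (d - 1).factorial := by
    have E1 : Equiv.Perm {x : ZMod d // x ≠ 0} ≃ {σ : Equiv.Perm (ZMod d) // σ 0 = 0} :=
      (Equiv.Perm.subtypeEquivSubtypePerm (fun x : ZMod d => x ≠ 0)).trans
        (Equiv.subtypeEquiv (Equiv.refl _) (fun f => by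
          constructor
          · intro hf
            exact hf 0 (by simp)
          · intro hf a hfa
            have : a = 0 := not_not.mp hfa
            subst this
            simpa using hf))
    rw [← Nat.card_congr E1, Nat.card_eq_fintype_card, Fintype.card_perm, hsub]
  have h3 : Nat.card {a : ZMod d → ZMod p // a 0 = 0} = p ^ (d - 1) := by
    have E2 : {a : ZMod d → ZMod p // a 0 = 0} ≃ ({x : ZMod d // x ≠ 0} → ZMod p) :=
      { toFun := fun a x => a.1 x.1
        invFun := fun g => ⟨fun x => if h : x = 0 then 0 else g ⟨x, h⟩, by simp⟩
        left_inv := by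
          rintro ⟨a, ha⟩
          ext x
          dsimp only
          split
          · next h => rw [h, ha]
          · rfl
        right_inv := by
          intro g
          funext x
          simp [x.2] }
    rw [Nat.card_congr E2, Nat.card_eq_fintype_card, Fintype.card_fun, hsub, ZMod.card]
  rw [h1, h2, h3]
  ring
end

section
/- For every integer n ≥ 1, the minimal length m(n) of a universal word for R₂ satisfies (n−1)! + n − 1 ≤ m(n) ≤ (n−1)·(n−1)! + 1. -/
open Equiv Filter Topology

/- ### Basic lemmas -/

lemma cyc_pow_apply (n : ℕ) (m : ℕ) (x : ZMod n) : (cyc n ^ m) x = x + m := by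
  induction m with
  | zero => simp
  | succ k ih => rw [pow_succ]; simp [cyc, Equiv.Perm.mul_apply, ih]; ring

lemma cyc_zpow_apply (n : ℕ) (i : ℤ) (x : ZMod n) : (cyc n ^ i) x = x + i := by
  cases i with
  | ofNat m => simpa using cyc_pow_apply n m x
  | negSucc m =>
    rw [zpow_negSucc, Equiv.Perm.inv_eq_iff_eq, cyc_pow_apply]
    push_cast
    ring

lemma cyc_zpow_mul_apply (n : ℕ) (i : ℤ) (π : Equiv.Perm (ZMod n)) (x : ZMod n) :
    (cyc n ^ i * π) x = π x + i := by
  rw [Equiv.Perm.mul_apply, cyc_zpow_apply]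

lemma oneLine_head (n : ℕ) (hn : 1 ≤ n) (ρ : Equiv.Perm (ZMod n)) :
    ∃ rest : List (ZMod n), oneLine n ρ = ρ 1 :: rest ∧ rest.length = n - 1 := by
  obtain ⟨m, rfl⟩ : ∃ m, n = m + 1 := ⟨n - 1, by omega⟩
  rw [oneLine, List.ofFn_succ]
  refine ⟨List.ofFn fun i : Fin m => ρ ((((i : ℕ) + 1 + 1 : ℕ)) : ZMod (m+1)), ?_, by simp⟩
  simp

lemma surj_aux (n : ℕ) [NeZero n] (x : ZMod n) :
    ∃ j : Fin n, (((j : ℕ) + 1 : ℕ) : ZMod n) = x := by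
  refine ⟨⟨(x - 1).val, ZMod.val_lt _⟩, ?_⟩
  push_cast
  rw [ZMod.natCast_val, ZMod.cast_id]
  ring

lemma oneLine_injective (n : ℕ) [NeZero n] : Function.Injective (oneLine n) := by
  intro ρ₁ ρ₂ h
  unfold oneLine at h
  rw [List.ofFn_inj] at h
  ext x
  obtain ⟨j, rfl⟩ := surj_aux n x
  exact congrFun h j

/- ### shifted permutation starting with `a` -/

noncomputable def shiftTo (n : ℕ) (a : ZMod n) (ρ : Equiv.Perm (ZMod n)) : Equiv.Perm (ZMod n) :=
  cyc n ^ (((a - ρ 1).val : ℤ)) * ρ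

lemma shiftTo_apply (n : ℕ) [NeZero n] (a : ZMod n) (ρ : Equiv.Perm (ZMod n)) (x : ZMod n) :
    shiftTo n a ρ x = ρ x + (a - ρ 1) := by
  rw [shiftTo, cyc_zpow_mul_apply]
  push_cast
  rw [ZMod.natCast_val, ZMod.cast_id]

lemma shiftTo_one (n : ℕ) [NeZero n] (a : ZMod n) (ρ : Equiv.Perm (ZMod n)) :
    shiftTo n a ρ 1 = a := by
  rw [shiftTo_apply]; ring

/- ### chain construction for the upper bound -/

noncomputable def chain (n : ℕ) : List (Equiv.Perm (ZMod n)) → ZMod n → List (ZMod n)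
  | [], a => [a]
  | ρ :: l, a =>
      (oneLine n (shiftTo n a ρ)).dropLast ++ chain n l (shiftTo n a ρ ((n : ℕ) : ZMod n))

lemma chain_length (n : ℕ) (l : List (Equiv.Perm (ZMod n))) (a : ZMod n) :
    (chain n l a).length = 1 + l.length * (n - 1) := by
  induction l generalizing a with
  | nil => simp [chain]
  | cons ρ l ih =>
    rw [chain, List.length_append, List.length_dropLast, oneLine_length, ih]
    simp [List.length_cons]
    ring

lemma chain_head (n : ℕ) (hn : 1 ≤ n) (l : List (Equiv.Perm (ZMod n))) (a : ZMod n) :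
    ∃ t, chain n l a = a :: t := by
  haveI : NeZero n := ⟨by omega⟩
  induction l generalizing a with
  | nil => exact ⟨[], rfl⟩
  | cons ρ l ih =>
    rw [chain]
    obtain ⟨t, ht⟩ := ih (shiftTo n a ρ ((n : ℕ) : ZMod n))
    rw [ht]
    obtain ⟨rest, hr, hrl⟩ := oneLine_head n hn (shiftTo n a ρ)
    rcases Nat.lt_or_ge n 2 with h2 | h2
    · -- n = 1 : the dropLast is empty and everything is equal anyway
      have hn1 : n = 1 := by omega
      have : rest = [] := List.length_eq_zero_iff.mp (by omega)
      subst this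
      subst hn1
      rw [hr, shiftTo_one]
      exact ⟨t, by rw [Subsingleton.elim (shiftTo 1 a ρ ((1:ℕ) : ZMod 1)) a]; simp⟩
    · have hne : rest ≠ [] := by
        intro h; rw [h] at hrl; simp at hrl; omega
      rw [hr, shiftTo_one, List.dropLast_cons_of_ne_nil hne]
      exact ⟨rest.dropLast ++ (shiftTo n a ρ ((n:ℕ):ZMod n)) :: t, rfl⟩

lemma oneLine_eq_dropLast_append (n : ℕ) (hn : 1 ≤ n) (ρ : Equiv.Perm (ZMod n)) :
    oneLine n ρ = (oneLine n ρ).dropLast ++ [ρ ((n : ℕ) : ZMod n)] := by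
  have hne : oneLine n ρ ≠ [] := by
    have := oneLine_length n ρ; intro h; rw [h] at this; simp at this; omega
  conv_lhs => rw [← List.dropLast_append_getLast hne]
  congr 1
  rw [List.getLast_eq_getElem]
  simp only [oneLine_length]
  unfold oneLine
  rw [List.getElem_ofFn]
  show [ρ (((n - 1 : ℕ) + 1 : ℕ) : ZMod n)] = [ρ ((n : ℕ) : ZMod n)]
  have h : n - 1 + 1 = n := by omega
  rw [h]

lemma chain_spec (n : ℕ) (hn : 1 ≤ n) (l : List (Equiv.Perm (ZMod n)))
    (ρ : Equiv.Perm (ZMod n)) (hρ : ρ ∈ l) (a : ZMod n) :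
    ∃ i : ℤ, oneLine n (cyc n ^ i * ρ) <:+: chain n l a := by
  haveI : NeZero n := ⟨by omega⟩
  induction l generalizing a with
  | nil => simp at hρ
  | cons ρ₀ l ih =>
    rcases List.mem_cons.1 hρ with rfl | hmem
    · refine ⟨((a - ρ 1).val : ℤ), ?_⟩
      obtain ⟨t, ht⟩ := chain_head n hn l (shiftTo n a ρ ((n : ℕ) : ZMod n))
      rw [chain, ht]
      have : (oneLine n (shiftTo n a ρ)).dropLast ++ shiftTo n a ρ ((n:ℕ):ZMod n) :: t
          = oneLine n (shiftTo n a ρ) ++ t := by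
        conv_rhs => rw [oneLine_eq_dropLast_append n hn]
        simp
      rw [this]
      exact (List.prefix_append _ t).isInfix
    · obtain ⟨i, hi⟩ := ih hmem (shiftTo n a ρ₀ ((n : ℕ) : ZMod n))
      exact ⟨i, hi.trans (List.suffix_append _ _).isInfix⟩

/- ### the representative set and its cardinality -/

noncomputable def repsList (n : ℕ) [NeZero n] : List (Equiv.Perm (ZMod n)) :=
  (Finset.univ.filter (fun ρ : Equiv.Perm (ZMod n) => ρ 1 = 0)).toList

/-- Decomposition of a permutation as (value at 1, normalized representative). -/
noncomputable def decompose (n : ℕ) [NeZero n] :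
    Equiv.Perm (ZMod n) ≃ ZMod n × {ρ : Equiv.Perm (ZMod n) // ρ 1 = 0} where
  toFun ρ := (ρ 1, ⟨shiftTo n 0 ρ, shiftTo_one n 0 ρ⟩)
  invFun p := shiftTo n p.1 p.2.1
  left_inv ρ := by
    ext x
    simp only [shiftTo_apply, shiftTo_one]
    ring
  right_inv p := by
    obtain ⟨b, ρ₀, h₀⟩ := p
    refine Prod.ext ?_ (Subtype.ext ?_) <;> simp only
    · rw [shiftTo_one]
    · ext x
      simp only [shiftTo_apply, shiftTo_one, h₀]
      ring

lemma reps_card (n : ℕ) (hn : 1 ≤ n) [NeZero n] :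
    (repsList n).length = (n - 1).factorial := by
  have h1 : (repsList n).length
      = Fintype.card {ρ : Equiv.Perm (ZMod n) // ρ 1 = 0} := by
    rw [repsList, Finset.length_toList, Fintype.card_subtype]
  have h2 : Fintype.card (Equiv.Perm (ZMod n))
      = n * Fintype.card {ρ : Equiv.Perm (ZMod n) // ρ 1 = 0} := by
    rw [Fintype.card_congr (decompose n), Fintype.card_prod, ZMod.card]
  rw [Fintype.card_perm, ZMod.card] at h2
  have h3 : n.factorial = n * (n - 1).factorial := by
    conv_lhs => rw [show n = (n - 1) + 1 by omega]
    rw [Nat.factorial_succ]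
    congr 1
    omega
  rw [h1]
  have := h2.symm.trans h3
  exact Nat.eq_of_mul_eq_mul_left (by omega) this

/- ### upper bound: the chain over all representatives is universal -/

lemma chain_universal (n : ℕ) (hn : 1 ≤ n) [NeZero n] :
    IsUniversalR2 n (chain n (repsList n) 0) := by
  intro π
  have hmem : shiftTo n 0 π ∈ repsList n := by
    rw [repsList, Finset.mem_toList, Finset.mem_filter]
    exact ⟨Finset.mem_univ _, shiftTo_one n 0 π⟩
  obtain ⟨i, hi⟩ := chain_spec n hn (repsList n) (shiftTo n 0 π) hmem 0
  refine ⟨cyc n ^ i * shiftTo n 0 π, ⟨i + (((0 - π 1).val : ℕ) : ℤ), ?_⟩, hi⟩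
  rw [shiftTo, ← mul_assoc, ← zpow_add]

/- ### lower bound -/

lemma univ_length_lower (n : ℕ) (hn : 1 ≤ n) [NeZero n] (w : List (ZMod n))
    (hw : IsUniversalR2 n w) :
    (n - 1).factorial + n - 1 ≤ w.length := by
  -- w has length at least n
  have hwn : n ≤ w.length := by
    obtain ⟨ρ, _, hinf⟩ := hw 1
    have := hinf.length_le
    rwa [oneLine_length] at this
  -- for every π there is a "position" where a representative of its class occurs
  have key : ∀ ρ : Equiv.Perm (ZMod n), ∃ p : ℕ, ∃ ρ' : Equiv.Perm (ZMod n),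
      (∃ i : ℤ, ρ' = cyc n ^ i * ρ) ∧ p + n ≤ w.length ∧
      (w.drop p).take n = oneLine n ρ' := by
    intro ρ
    obtain ⟨ρ', hi, s, t, hst⟩ := hw ρ
    refine ⟨s.length, ρ', hi, ?_, ?_⟩
    · have := congrArg List.length hst
      simp [oneLine_length] at this
      omega
    · rw [← hst, List.append_assoc, List.drop_left, List.take_left' (oneLine_length n ρ')]
  classical
  set S := Finset.univ.filter (fun ρ : Equiv.Perm (ZMod n) => ρ 1 = 0) with hS
  have hcard : S.card = (n - 1).factorial := by
    have := reps_card n hn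
    rwa [repsList, Finset.length_toList] at this
  have hinj : S.card ≤ (Finset.range (w.length - n + 1)).card := by
    refine Finset.card_le_card_of_injOn (fun ρ => (key ρ).choose) ?_ ?_
    · intro ρ _
      obtain ⟨ρ', _, hle, _⟩ := (key ρ).choose_spec
      simp only [Finset.mem_coe, Finset.mem_range]
      omega
    · intro ρ₁ hρ₁ ρ₂ hρ₂ heq
      rw [hS, Finset.coe_filter] at hρ₁ hρ₂
      obtain ⟨ρ₁', ⟨i₁, hi₁⟩, _, hw₁⟩ := (key ρ₁).choose_spec
      obtain ⟨ρ₂', ⟨i₂, hi₂⟩, _, hw₂⟩ := (key ρ₂).choose_spec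
      have heq' : (key ρ₁).choose = (key ρ₂).choose := heq
      rw [heq'] at hw₁
      have hol : oneLine n ρ₁' = oneLine n ρ₂' := by rw [← hw₁, ← hw₂]
      have hperm : ρ₁' = ρ₂' := oneLine_injective n hol
      rw [hi₁, hi₂] at hperm
      have h1 : ∀ x, ρ₁ x + (i₁ : ZMod n) = ρ₂ x + (i₂ : ZMod n) := by
        intro x
        have := congrArg (fun f : Equiv.Perm (ZMod n) => f x) hperm
        simpa [cyc_zpow_mul_apply] using this
      have hii : (i₁ : ZMod n) = (i₂ : ZMod n) := by
        have := h1 1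
        rw [hρ₁.2, hρ₂.2] at this
        simpa using this
      ext x
      have := h1 x
      rw [hii] at this
      exact add_right_cancel this
  rw [Finset.card_range, hcard] at hinj
  have hfac : 1 ≤ (n-1).factorial := Nat.one_le_iff_ne_zero.mpr (Nat.factorial_ne_zero _)
  omega

/-- For every `n ≥ 1`, `(n−1)! + n − 1 ≤ m(n) ≤ (n−1)·(n−1)! + 1`. -/
theorem stmt13 (n : ℕ) (hn : 1 ≤ n) :
    (n - 1).factorial + n - 1 ≤ mWord n ∧ mWord n ≤ (n - 1) * (n - 1).factorial + 1 := by
  haveI : NeZero n := ⟨by omega⟩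
  have hmem : (chain n (repsList n) 0).length ∈
      {k | ∃ w : List (ZMod n), w.length = k ∧ IsUniversalR2 n w} :=
    ⟨_, rfl, chain_universal n hn⟩
  have hlen : (chain n (repsList n) 0).length = (n - 1) * (n - 1).factorial + 1 := by
    rw [chain_length n, reps_card n hn]; ring
  constructor
  · have hne : {k | ∃ w : List (ZMod n), w.length = k ∧ IsUniversalR2 n w}.Nonempty :=
      ⟨_, hmem⟩
    obtain ⟨w, hwl, hwu⟩ := Nat.sInf_mem hne
    rw [mWord, ← hwl]
    exact univ_length_lower n hn w hwu
  · rw [← hlen]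
    exact Nat.sInf_le hmem
end
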